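/- arXiv:2511.01851 — 2 statements merged into one kernel-verified Lean document; each statement's English description precedes it below -/
import Mathlib

section
/- Let G and H be finitely generated groups with G one-ended and H Noetherian (every subgroup of H is finitely generated). Let π : H → G be a surjective group homomorphism and let S be a finite generating subset of H. Let ℋ be the Cayley graph of H with respect to S and 𝒢 the Cayley graph of G with respect to π(S). Then C*_E(𝒢) ≤ C_E(ℋ). -/
open MeasureTheory Set
open scoped ENNReal

namespace PercPaper

/-! ### The Bernoulli(p) product measure on `ι → Bool`

We realize the Bernoulli product measure as the pushforward of the uniform
measure on `[0,1)` under the standard digit-interleaving construction: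
the binary digits of a uniform point of `[0,1)` are i.i.d. fair coins; by
interleaving (via the pairing function `Nat.pair`) we extract countably many
independent uniform random variables, and thresholding each at `p` produces
i.i.d. Bernoulli(`p`) bits. -/

/-- The `k`-th binary digit of a real number `x ∈ [0,1)`. -/
noncomputable def digit (k : ℕ) (x : ℝ) : Bool :=
  decide (⌊x * 2 ^ (k + 1)⌋ % 2 = 1)

/-- The `i`-th of countably many independent uniforms extracted from a single
uniform `x ∈ [0,1)` by digit interleaving. -/
noncomputable def unif (i : ℕ) (x : ℝ) : ℝ :=
  ∑' k : ℕ, if digit (Nat.pair i k) x then ((2 : ℝ) ^ (k + 1))⁻¹ else 0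

/-- The coordinates of the Bernoulli(`p`) product: coordinate `i` is `true`
("open") iff the `i`-th extracted uniform is `< p`. -/
noncomputable def coords (ι : Type) [Countable ι] (p : ℝ) (x : ℝ) : ι → Bool :=
  letI : Encodable ι := Encodable.ofCountable ι
  fun i => decide (unif (Encodable.encode i) x < p)

/-- The Bernoulli(`p`) product measure on `ι → Bool`. -/
noncomputable def bernoulliProd (ι : Type) [Countable ι] (p : ℝ) :
    Measure (ι → Bool) :=
  Measure.map (coords ι p) (volume.restrict (Set.Ico (0 : ℝ) 1))

/-! ### Graphs: the class of graphs under consideration -/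

/-- A simple, nonempty, locally finite, connected graph.  (Such a graph is
automatically countable; we record countability as a field.) -/
structure SpaceGraph : Type 1 where
  V : Type
  G : SimpleGraph V
  connected : G.Connected
  locallyFinite : ∀ v : V, (G.neighborSet v).Finite
  countableV : Countable V

instance (Γ : SpaceGraph) : Countable Γ.V := Γ.countableV

/-! ### Combinatorial notions on plain simple graphs -/

/-- `u` and `v` are `k`-adjacent: `1 ≤ d_G(u,v) ≤ k`. -/
def kAdj {V : Type} (G : SimpleGraph V) (k : ℕ) (u v : V) : Prop :=
  1 ≤ G.dist u v ∧ G.dist u v ≤ k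

/-- A set of vertices is `k`-connected if it is connected under `k`-adjacency. -/
def kConnectedSet {V : Type} (G : SimpleGraph V) (k : ℕ) (A : Set V) : Prop :=
  ∀ x ∈ A, ∀ y ∈ A,
    Relation.ReflTransGen (fun a b => a ∈ A ∧ b ∈ A ∧ kAdj G k a b) x y

/-- Two distinct edges are `k`-adjacent if some endpoint of one lies at
distance at most `k` from some endpoint of the other. -/
def edgeKAdj {V : Type} (G : SimpleGraph V) (k : ℕ) (e f : Sym2 V) : Prop :=
  e ≠ f ∧ ∃ x ∈ e, ∃ y ∈ f, G.dist x y ≤ k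

/-- A set of edges is `k`-connected if it is connected under `k`-adjacency. -/
def edgeKConnectedSet {V : Type} (G : SimpleGraph V) (k : ℕ) (A : Set (Sym2 V)) : Prop :=
  ∀ e ∈ A, ∀ f ∈ A,
    Relation.ReflTransGen (fun a b => a ∈ A ∧ b ∈ A ∧ edgeKAdj G k a b) e f

/-- `A` is a cutset between `u` and `v`: every walk from `u` to `v` meets `A`. -/
def IsCutset {V : Type} (G : SimpleGraph V) (A : Set V) (u v : V) : Prop :=
  ∀ w : G.Walk u v, ∃ x ∈ w.support, x ∈ A

/-- `A` is a minimal cutset between `u` and `v`. -/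
def IsMinCutset {V : Type} (G : SimpleGraph V) (A : Set V) (u v : V) : Prop :=
  IsCutset G A u v ∧ ∀ B : Set V, B ⊂ A → ¬IsCutset G B u v

/-- `C(G) ≤ k`: every minimal cutset between two vertices is `k`-connected. -/
def cutConnLe {V : Type} (G : SimpleGraph V) (k : ℕ) : Prop :=
  ∀ u v : V, ∀ A : Set V, IsMinCutset G A u v → kConnectedSet G k A

/-- `C*(G) ≤ k`: every finite minimal cutset between two vertices is `k`-connected. -/
def cutConnStarLe {V : Type} (G : SimpleGraph V) (k : ℕ) : Prop :=
  ∀ u v : V, ∀ A : Set V, A.Finite → IsMinCutset G A u v → kConnectedSet G k A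

/-- `A` is a bond-cutset between `u` and `v`: a set of edges of `G` such that
every walk from `u` to `v` uses an edge of `A`. -/
def IsBondCutset {V : Type} (G : SimpleGraph V) (A : Set (Sym2 V)) (u v : V) : Prop :=
  A ⊆ G.edgeSet ∧ ∀ w : G.Walk u v, ∃ e ∈ w.edges, e ∈ A

/-- `A` is a minimal bond-cutset between `u` and `v`. -/
def IsMinBondCutset {V : Type} (G : SimpleGraph V) (A : Set (Sym2 V)) (u v : V) : Prop :=
  IsBondCutset G A u v ∧ ∀ B : Set (Sym2 V), B ⊂ A → ¬IsBondCutset G B u v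

/-- `C_E(G) ≤ k`: every minimal bond-cutset between two vertices is `k`-connected. -/
def edgeCutConnLe {V : Type} (G : SimpleGraph V) (k : ℕ) : Prop :=
  ∀ u v : V, ∀ A : Set (Sym2 V), IsMinBondCutset G A u v → edgeKConnectedSet G k A

/-- `C*_E(G) ≤ k`: every finite minimal bond-cutset between two vertices is
`k`-connected. -/
def edgeCutConnStarLe {V : Type} (G : SimpleGraph V) (k : ℕ) : Prop :=
  ∀ u v : V, ∀ A : Set (Sym2 V), A.Finite → IsMinBondCutset G A u v →
    edgeKConnectedSet G k A

/-- Reachability inside a set `S` of vertices. -/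
def reachIn {V : Type} (G : SimpleGraph V) (S : Set V) : V → V → Prop :=
  Relation.ReflTransGen fun a b => a ∈ S ∧ b ∈ S ∧ G.Adj a b

/-- There is a path from `x` to `y` all of whose vertices lie in `S`. -/
def pathIn {V : Type} (G : SimpleGraph V) (S : Set V) (x y : V) : Prop :=
  x ∈ S ∧ reachIn G S x y

/-- The connected component of `u` of the subgraph induced on `S`. -/
def compIn {V : Type} (G : SimpleGraph V) (S : Set V) (u : V) : Set V :=
  {v | pathIn G S u v}

/-- `G` is one-ended: for every finite set `F` of vertices, the complement of
`F` has exactly one infinite connected component. -/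
def OneEnded {V : Type} (G : SimpleGraph V) : Prop :=
  ∀ F : Set V, F.Finite →
    ∃ u, u ∉ F ∧ (compIn G Fᶜ u).Infinite ∧
      ∀ v, v ∉ F → (compIn G Fᶜ v).Infinite → pathIn G Fᶜ u v

/-- The outer vertex boundary `∂_V A`: vertices not in `A` adjacent to `A`. -/
def vertexBoundary {V : Type} (G : SimpleGraph V) (A : Set V) : Set V :=
  {v | v ∉ A ∧ ∃ u ∈ A, G.Adj u v}

/-- A fibration: a 1-Lipschitz map along which every edge at the image of `x`
lifts to an edge at `x`. -/
def IsFibration {V W : Type} (GrL : SimpleGraph V) (GrS : SimpleGraph W)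
    (pr : V → W) : Prop :=
  (∀ x y : V, GrS.dist (pr x) (pr y) ≤ GrL.dist x y) ∧
  (∀ (x : V) (v : W), GrS.Adj (pr x) v → ∃ y : V, GrL.Adj x y ∧ pr y = v)

/-- `φ` is an `A`-quasi-isometry. -/
def IsQI {V W : Type} (A : ℝ) (G : SimpleGraph V) (H : SimpleGraph W)
    (φ : V → W) : Prop :=
  (∀ x y : V, (1 / A) * (G.dist x y : ℝ) - A ≤ (H.dist (φ x) (φ y) : ℝ) ∧
      (H.dist (φ x) (φ y) : ℝ) ≤ A * (G.dist x y : ℝ) + A) ∧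
  (∀ z : W, ∃ x : V, (H.dist z (φ x) : ℝ) ≤ A)

/-- `G` and `H` are `A`-quasi-isometric (with `A`-quasi-inverse maps). -/
def QuasiIsometric {V W : Type} (A : ℝ) (G : SimpleGraph V) (H : SimpleGraph W) : Prop :=
  ∃ (φ : V → W) (ψ : W → V), IsQI A G H φ ∧ IsQI A H G ψ ∧
    (∀ x : V, (G.dist (ψ (φ x)) x : ℝ) ≤ A) ∧
    (∀ z : W, (H.dist (φ (ψ z)) z : ℝ) ≤ A)

/-! ### Balls, transitivity, the class `𝔊`, and the local topology -/

/-- The ball of radius `r` around `o`. -/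
def ball (Γ : SpaceGraph) (o : Γ.V) (r : ℕ) : Set Γ.V := {v | Γ.G.dist o v ≤ r}

/-- The sphere of radius `r` around `o`. -/
def sphere (Γ : SpaceGraph) (o : Γ.V) (r : ℕ) : Set Γ.V := {v | Γ.G.dist o v = r}

/-- `Γ` is (vertex-)transitive. -/
def IsTransitive (Γ : SpaceGraph) : Prop :=
  ∀ u v : Γ.V, ∃ φ : Γ.G ≃g Γ.G, φ u = v

/-- Membership in the class `𝔊`: transitive, superlinear growth, and
polynomial growth. -/
def InPolyClass (Γ : SpaceGraph) : Prop :=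
  IsTransitive Γ ∧
  (∀ (o : Γ.V) (K : ℕ), ∃ R : ℕ, ∀ r : ℕ, R ≤ r → K * r ≤ (ball Γ o r).ncard) ∧
  (∃ C d : ℕ, ∀ (o : Γ.V) (r : ℕ), 1 ≤ r → (ball Γ o r).ncard ≤ C * r ^ d)

lemma self_mem_ball (Γ : SpaceGraph) (o : Γ.V) (r : ℕ) : o ∈ ball Γ o r := by
  simp [ball, SimpleGraph.dist_self]

/-- The rooted balls of radius `r` in `Γ` (around `o`) and `Δ` (around `o'`)
are isomorphic, by an isomorphism matching the roots. -/
def rootedBallIso (Γ Δ : SpaceGraph) (o : Γ.V) (o' : Δ.V) (r : ℕ) : Prop :=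
  ∃ φ : Γ.G.induce (ball Γ o r) ≃g Δ.G.induce (ball Δ o' r),
    φ ⟨o, self_mem_ball Γ o r⟩ = ⟨o', self_mem_ball Δ o' r⟩

/-- `R(Γ,Δ) ≥ r`: the `r`-balls of `Γ` and `Δ` are isomorphic as rooted graphs. -/
def RGe (Γ Δ : SpaceGraph) (r : ℕ) : Prop :=
  ∃ (o : Γ.V) (o' : Δ.V), rootedBallIso Γ Δ o o' r

/-! ### Bernoulli percolation -/

/-- The probability of the event `A` under Bernoulli(`p`) bond percolation on `Γ`.
(Configurations assign a state to every element of `Sym2 Γ.V`; only the states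
of actual edges matter for the events considered.) -/
noncomputable def prob (Γ : SpaceGraph) (p : ℝ) (A : Set (Sym2 Γ.V → Bool)) : ℝ :=
  (bernoulliProd (Sym2 Γ.V) p A).toReal

/-- The probability of the event `A`, as an extended nonnegative real. -/
noncomputable def probNN (Γ : SpaceGraph) (p : ℝ) (A : Set (Sym2 Γ.V → Bool)) : ℝ≥0∞ :=
  bernoulliProd (Sym2 Γ.V) p A

/-- `u` and `v` are adjacent and the edge between them is open in `ω`. -/
def openAdj (Γ : SpaceGraph) (ω : Sym2 Γ.V → Bool) (u v : Γ.V) : Prop :=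
  Γ.G.Adj u v ∧ ω s(u, v) = true

/-- `u` and `v` are connected by an open path in `ω`. -/
def Conn (Γ : SpaceGraph) (ω : Sym2 Γ.V → Bool) (u v : Γ.V) : Prop :=
  Relation.ReflTransGen (openAdj Γ ω) u v

/-- The (open) cluster of `u` in `ω`. -/
def cluster (Γ : SpaceGraph) (ω : Sym2 Γ.V → Bool) (u : Γ.V) : Set Γ.V :=
  {v | Conn Γ ω u v}

/-- `θ_Γ(p)` with root `o` (independent of `o` for transitive graphs). -/
noncomputable def theta (Γ : SpaceGraph) (o : Γ.V) (p : ℝ) : ℝ :=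
  prob Γ p {ω | (cluster Γ ω o).Infinite}

/-- The critical parameter `p_c(Γ)` (with root `o`). -/
noncomputable def pc (Γ : SpaceGraph) (o : Γ.V) : ℝ :=
  sInf ({1} ∪ {p : ℝ | p ∈ Set.Icc (0 : ℝ) 1 ∧ 0 < theta Γ o p})


/-! ### Good and bad vertices, interfaces -/

/-- Open connectivity using only vertices of `S`. -/
def ConnIn (Γ : SpaceGraph) (ω : Sym2 Γ.V → Bool) (S : Set Γ.V) (u v : Γ.V) : Prop :=
  Relation.ReflTransGen (fun a b => a ∈ S ∧ b ∈ S ∧ openAdj Γ ω a b) u v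

/-- The uniqueness event `U(m,n,x)`: at most one cluster of `ω` restricted to
`B(x,n)` intersects both `B(x,m)` and `S(x,n)`. -/
def UEvent (Γ : SpaceGraph) (ω : Sym2 Γ.V → Bool) (m n : ℕ) (x : Γ.V) : Prop :=
  ∀ a b a' b' : Γ.V, a ∈ ball Γ x m → b ∈ sphere Γ x n →
    a' ∈ ball Γ x m → b' ∈ sphere Γ x n →
    ConnIn Γ ω (ball Γ x n) a b → ConnIn Γ ω (ball Γ x n) a' b' →
    ConnIn Γ ω (ball Γ x n) a a'

/-- `x` is `N`-good in `ω`. -/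
def NGood (Γ : SpaceGraph) (ω : Sym2 Γ.V → Bool) (N : ℕ) (x : Γ.V) : Prop :=
  ∀ z : Γ.V, (z = x ∨ Γ.G.Adj x z) →
    (∃ a ∈ ball Γ z N, ∃ b ∈ sphere Γ z (10 * N), Conn Γ ω a b) ∧
      UEvent Γ ω (2 * N) (5 * N) z

/-- `x` is `N`-bad in `ω`. -/
def NBad (Γ : SpaceGraph) (ω : Sym2 Γ.V → Bool) (N : ℕ) (x : Γ.V) : Prop :=
  ¬NGood Γ ω N x

/-- `C_x^bad(N)`: the `t`-connected component of `x` within the `N`-bad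
vertices (empty if `x` is `N`-good). -/
def badComp (Γ : SpaceGraph) (ω : Sym2 Γ.V → Bool) (N t : ℕ) (x : Γ.V) : Set Γ.V :=
  {y | NBad Γ ω N x ∧
    Relation.ReflTransGen (fun a b => NBad Γ ω N a ∧ NBad Γ ω N b ∧ kAdj Γ.G t a b) x y}

/-- `C_o(N)`: the set of vertices within distance `N` of the cluster of `o`. -/
def clusterNbhd (Γ : SpaceGraph) (ω : Sym2 Γ.V → Bool) (o : Γ.V) (N : ℕ) : Set Γ.V :=
  {v | ∃ u ∈ cluster Γ ω o, Γ.G.dist v u ≤ N}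

/-- The exposed boundary `∂A`: vertices of `A` adjacent to an infinite
connected component of the complement of `A`. -/
def exposedBoundary (Γ : SpaceGraph) (A : Set Γ.V) : Set Γ.V :=
  {v | v ∈ A ∧ ∃ w, w ∉ A ∧ Γ.G.Adj v w ∧ (compIn Γ.G Aᶜ w).Infinite}

/-- An interface (relative to the root `o` and the connectivity constant `t`):
a finite `t`-connected set of vertices containing `o` or surrounding `o`. -/
def IsInterface (Γ : SpaceGraph) (o : Γ.V) (t : ℕ) (I : Finset Γ.V) : Prop :=
  kConnectedSet Γ.G t (↑I : Set Γ.V) ∧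
    (o ∈ I ∨ (o ∉ I ∧ (compIn Γ.G ((↑I : Set Γ.V))ᶜ o).Finite))

/-- The set of vertices within distance `r` of `I`. -/
def interfaceNbhd (Γ : SpaceGraph) (I : Finset Γ.V) (r : ℕ) : Set Γ.V :=
  {v | ∃ y ∈ I, Γ.G.dist v y ≤ r}

/-- The interface `I` occurs in `ω` at scale `N`: all its vertices are `N`-bad,
all vertices at distance between `1` and `t` from it are `N`-good, and the
closed edges with both endpoints within distance `5N` of `I` form a
bond-cutset between `o` and infinity. -/
def InterfaceOccurs (Γ : SpaceGraph) (o : Γ.V) (t N : ℕ) (ω : Sym2 Γ.V → Bool)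
    (I : Finset Γ.V) : Prop :=
  (∀ x ∈ I, NBad Γ ω N x) ∧
  (∀ x : Γ.V, x ∉ I → (∃ y ∈ I, Γ.G.dist x y ≤ t) → NGood Γ ω N x) ∧
  (∀ f : ℕ → Γ.V, f 0 = o → Function.Injective f →
    (∀ n : ℕ, Γ.G.Adj (f n) (f (n + 1))) →
    ∃ n : ℕ, ω s(f n, f (n + 1)) = false ∧
      f n ∈ interfaceNbhd Γ I (5 * N) ∧ f (n + 1) ∈ interfaceNbhd Γ I (5 * N))

/-- A multi-interface: a finite nonempty collection of pairwise disjoint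
interfaces. -/
def IsMultiInterface (Γ : SpaceGraph) (o : Γ.V) (t : ℕ)
    (M : Finset (Finset Γ.V)) : Prop :=
  M.Nonempty ∧ (∀ I ∈ M, IsInterface Γ o t I) ∧
    ∀ I ∈ M, ∀ J ∈ M, I ≠ J → Disjoint I J

/-- The size of a multi-interface. -/
def multiSize {α : Type} (M : Finset (Finset α)) : ℕ := ∑ I ∈ M, I.card

/-- The multi-interface `M` occurs in `ω` at scale `N`. -/
def MultiOccurs (Γ : SpaceGraph) (o : Γ.V) (t N : ℕ) (ω : Sym2 Γ.V → Bool)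
    (M : Finset (Finset Γ.V)) : Prop :=
  ∀ I ∈ M, InterfaceOccurs Γ o t N ω I

/-! ### Growth degree and dimension -/

/-- `Γ` has growth of degree at most `d`. -/
def growthLe (Γ : SpaceGraph) (d : ℕ) : Prop :=
  ∃ C : ℕ, ∀ (o : Γ.V) (r : ℕ), 1 ≤ r → (ball Γ o r).ncard ≤ C * r ^ d

/-- The dimension of a graph of polynomial growth: the least degree `d` of a
polynomial upper bound on the growth. -/
noncomputable def dimen (Γ : SpaceGraph) : ℕ := sInf {d | growthLe Γ d}

/-! ### Cayley graphs and products of cycle-graphs -/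

/-- The Cayley graph of a group `K` with respect to a (symmetrized) set `T`. -/
def cayley (K : Type) [Group K] (T : Set K) : SimpleGraph K where
  Adj g h := g ≠ h ∧ (g⁻¹ * h ∈ T ∨ h⁻¹ * g ∈ T)
  symm := by
    constructor
    rintro g h ⟨hgh, hmem⟩
    exact ⟨hgh.symm, hmem.symm⟩
  loopless := ⟨fun g h => h.1 rfl⟩

/-- A finitely generated group is one-ended if all of its Cayley graphs with
respect to finite generating sets are one-ended. -/
def GroupOneEnded (K : Type) [Group K] : Prop :=
  ∀ T : Set K, T.Finite → Subgroup.closure T = ⊤ → OneEnded (cayley K T)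

/-- The box product of a finite family of graphs. -/
def boxProd {m : ℕ} (Vf : Fin m → Type) (Gf : ∀ i, SimpleGraph (Vf i)) :
    SimpleGraph (∀ i, Vf i) where
  Adj a b := ∃ i, (Gf i).Adj (a i) (b i) ∧ ∀ j, j ≠ i → a j = b j
  symm := by
    constructor
    rintro a b ⟨i, hadj, h⟩
    exact ⟨i, hadj.symm, fun j hj => (h j hj).symm⟩
  loopless := by
    constructor
    rintro a ⟨i, hadj, -⟩
    exact (Gf i).irrefl hadj

/-- Membership in the class `𝔄`: products of finitely many cycle-graphs
(connected graphs in which every vertex has degree 2), at least two of which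
are infinite. -/
def InA (Γ : SpaceGraph) : Prop :=
  ∃ (m : ℕ) (Vf : Fin m → Type) (Gf : ∀ i, SimpleGraph (Vf i)),
    (∀ i, (Gf i).Connected) ∧
    (∀ (i : Fin m) (v : Vf i), ((Gf i).neighborSet v).ncard = 2) ∧
    (∃ i j : Fin m, i ≠ j ∧ Infinite (Vf i) ∧ Infinite (Vf j)) ∧
    Nonempty (Γ.G ≃g boxProd Vf Gf)


/-! The quotient map `π` is a fibration of Cayley graphs, and since its kernel is finitely
generated, any two points of a fibre are joined by a walk whose image stays within some fixed
distance `L` of the fibre's image. Given a finite minimal bond-cutset `A` between `u` and `v`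
in `𝒢`, pick `z` farther than `L` from `A`; it lies on the side of `u` or of `v`, so `A` is also
a minimal cutset between `z` and the other vertex. The edges of `ℋ` mapping into `A` separate
lifts of these two vertices, so they contain a minimal bond-cutset `C`. A walk avoiding `π(C)`
lifts to a walk avoiding `C` that ends in the fibre of `z`, and the fibre walk closing it up
stays far from `A`; hence `π(C)` is still a cutset and equals `A` by minimality. Now `C` is
`k`-connected and `π` is `1`-Lipschitz, so `A` is `k`-connected. -/

open SimpleGraph

section Graph

variable {V : Type} {Γ : SimpleGraph V} {A B : Set (Sym2 V)} {u v z : V}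

lemma isBondCutset_iff :
    IsBondCutset Γ A u v ↔ A ⊆ Γ.edgeSet ∧ ¬(Γ.deleteEdges A).Reachable u v := by
  refine and_congr_right fun _ => ⟨fun h ⟨w⟩ => ?_, fun h w => ?_⟩
  · obtain ⟨e, he, heA⟩ := h (w.mapLe (Γ.deleteEdges_le A))
    rw [Walk.edges_mapLe_eq_edges] at he
    exact (edgeSet_deleteEdges A ▸ w.edges_subset_edgeSet he).2 heA
  · obtain ⟨e, heA, he⟩ := w.exists_mem_edges_of_not_reachable_deleteEdges h
    exact ⟨e, he, heA⟩

lemma IsBondCutset.symm (h : IsBondCutset Γ A u v) : IsBondCutset Γ A v u := by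
  rw [isBondCutset_iff] at h ⊢
  exact ⟨h.1, fun hvu => h.2 hvu.symm⟩

lemma IsMinBondCutset.symm (h : IsMinBondCutset Γ A u v) : IsMinBondCutset Γ A v u :=
  ⟨h.1.symm, fun B hB hcut => h.2 B hB hcut.symm⟩

lemma IsMinBondCutset.of_reachable_right (h : IsMinBondCutset Γ A u v)
    (hvz : (Γ.deleteEdges A).Reachable v z) : IsMinBondCutset Γ A u z := by
  simp only [IsMinBondCutset, isBondCutset_iff] at h ⊢
  refine ⟨⟨h.1.1, fun huz => h.1.2 (huz.trans hvz.symm)⟩, fun B hB ⟨hBE, hBuz⟩ => ?_⟩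
  exact h.2 B hB ⟨hBE, fun huv => hBuz (huv.trans (hvz.mono (deleteEdges_anti hB.1)))⟩

lemma IsMinBondCutset.exists_mem_reachable (h : IsMinBondCutset Γ A u v) {a : Sym2 V}
    (ha : a ∈ A) : ∃ x ∈ a, (Γ.deleteEdges A).Reachable u x := by
  have hcut : ¬IsBondCutset Γ (A \ {a}) u v := h.2 _ (Set.sdiff_singleton_ssubset.mpr ha)
  rw [isBondCutset_iff, not_and, not_not] at hcut
  obtain ⟨w⟩ := hcut (Set.sdiff_subset.trans h.1.1)
  obtain ⟨⟨⟨x, y⟩, hxy⟩, -, hx, hy⟩ := w.exists_boundary_dart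
    {x | (Γ.deleteEdges A).Reachable u x} Reachable.rfl (isBondCutset_iff.mp h.1).2
  obtain ⟨hadj, hnot⟩ := deleteEdges_adj.mp hxy
  by_cases hA : s(x, y) ∈ A
  · have hda : s(x, y) = a := by_contra fun hne => hnot ⟨hA, hne⟩
    exact ⟨x, hda ▸ Sym2.mem_mk_left x y, hx⟩
  · exact absurd (hx.trans (deleteEdges_adj.mpr ⟨hadj, hA⟩).reachable) hy

lemma IsMinBondCutset.reachable_or_reachable_of_mem (h : IsMinBondCutset Γ A u v)
    {a : Sym2 V} (ha : a ∈ A) {q : V} (hq : q ∈ a) :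
    (Γ.deleteEdges A).Reachable u q ∨ (Γ.deleteEdges A).Reachable v q := by
  obtain ⟨x, hxa, hx⟩ := h.exists_mem_reachable ha
  obtain ⟨y, hya, hy⟩ := h.symm.exists_mem_reachable ha
  have hxy : x ≠ y := by
    rintro rfl
    exact (isBondCutset_iff.mp h.1).2 (hx.trans hy.symm)
  rw [(Sym2.mem_and_mem_iff hxy).mp ⟨hxa, hya⟩, Sym2.mem_iff] at hq
  rcases hq with rfl | rfl
  exacts [Or.inl hx, Or.inr hy]

lemma IsMinBondCutset.reachable_or_reachable (hΓ : Γ.Connected) (h : IsMinBondCutset Γ A u v)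
    (z : V) : (Γ.deleteEdges A).Reachable u z ∨ (Γ.deleteEdges A).Reachable v z := by
  by_contra hz
  obtain ⟨d, -, hfst, hsnd⟩ := (hΓ.preconnected u z).some.exists_boundary_dart
    {x | (Γ.deleteEdges A).Reachable u x ∨ (Γ.deleteEdges A).Reachable v x}
    (Or.inl Reachable.rfl) hz
  by_cases hA : s(d.fst, d.snd) ∈ A
  · exact hsnd (h.reachable_or_reachable_of_mem hA (Sym2.mem_mk_right _ _))
  · have hadj : (Γ.deleteEdges A).Adj d.fst d.snd := deleteEdges_adj.mpr ⟨d.adj, hA⟩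
    exact hsnd (hfst.imp (·.trans hadj.reachable) (·.trans hadj.reachable))

lemma IsBondCutset.exists_isMinBondCutset_subset (hB : IsBondCutset Γ B u v) :
    ∃ C ⊆ B, IsMinBondCutset Γ C u v := by
  classical
  have hchain : ∀ c ⊆ {C | IsBondCutset Γ C u v}, IsChain (· ⊆ ·) c → c.Nonempty →
      ∃ lb ∈ {C | IsBondCutset Γ C u v}, ∀ C ∈ c, lb ⊆ C := by
    intro c hc hchain ⟨C₀, hC₀⟩
    refine ⟨⋂₀ c, ⟨(Set.sInter_subset_of_mem hC₀).trans (hc hC₀).1, fun w => ?_⟩,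
      fun C hC => Set.sInter_subset_of_mem hC⟩
    by_contra! hw
    -- a walk has finitely many edges, so a single member of the chain misses all of them
    obtain ⟨C, hCc, hC⟩ := DirectedOn.exists_mem_subset_of_finset_subset_biUnion (f := compl)
      ⟨C₀, hC₀⟩ (s := w.edges.toFinset)
      (fun C hC D hD => (hchain.total hC hD).elim
        (fun h => ⟨C, hC, le_rfl, Set.compl_subset_compl.mpr h⟩)
        (fun h => ⟨D, hD, Set.compl_subset_compl.mpr h, le_rfl⟩))
      (fun e he => by simpa using hw e (List.mem_toFinset.mp he))
    obtain ⟨e, he, heC⟩ := (hc hCc).2 w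
    exact hC (List.mem_toFinset.mpr he) heC
  obtain ⟨C, hCB, hC⟩ := zorn_superset_nonempty _ hchain B hB
  exact ⟨C, hCB, hC.prop, fun D hD hDcut => hD.2 (hC.le_of_le hDcut hD.1)⟩

lemma finite_setOf_dist_le (hΓ : Γ.Connected) (hlf : ∀ x, (Γ.neighborSet x).Finite)
    (c : V) (r : ℕ) : {x | Γ.dist x c ≤ r}.Finite := by
  induction r with
  | zero => simp [hΓ.dist_eq_zero_iff]
  | succ r ih =>
    refine (ih.biUnion fun y _ => (hlf y).insert y).subset fun x hx => ?_
    obtain ⟨w, hw⟩ := hΓ.exists_walk_length_eq_dist x c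
    cases w with
    | nil => exact Set.mem_biUnion (show Γ.dist c c ≤ r by simp) (Set.mem_insert _ _)
    | cons hadj p =>
      refine Set.mem_biUnion (show Γ.dist _ c ≤ r from ?_) (Set.mem_insert_of_mem _ hadj.symm)
      have := dist_le p
      simp only [Walk.length_cons, Set.mem_ofPred_eq] at hw hx
      omega

lemma exists_forall_lt_dist_of_finite [Infinite V] (hΓ : Γ.Connected)
    (hlf : ∀ x, (Γ.neighborSet x).Finite) (hA : A.Finite) (L : ℕ) :
    ∃ z, ∀ e ∈ A, ∀ q ∈ e, L < Γ.dist z q := by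
  classical
  have hnear : (⋃ e ∈ A, ⋃ q ∈ e.toFinset, {x | Γ.dist x q ≤ L}).Finite :=
    hA.biUnion fun e _ => e.toFinset.finite_toSet.biUnion fun q _ =>
      finite_setOf_dist_le hΓ hlf q L
  obtain ⟨z, hz⟩ := hnear.exists_notMem
  refine ⟨z, fun e he q hq => not_le.mp fun hzq => hz ?_⟩
  simp only [Set.mem_iUnion]
  exact ⟨e, he, q, Sym2.mem_toFinset.mpr hq, hzq⟩

lemma edgeKConnectedSet_image {W : Type} {Δ : SimpleGraph W} {f : V → W}
    (hf : ∀ x y, Δ.dist (f x) (f y) ≤ Γ.dist x y) {k : ℕ} {C : Set (Sym2 V)}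
    (hC : edgeKConnectedSet Γ k C) : edgeKConnectedSet Δ k (Sym2.map f '' C) := by
  rintro _ ⟨a, ha, rfl⟩ _ ⟨b, hb, rfl⟩
  refine Relation.ReflTransGen.lift' (Sym2.map f)
    (fun e e' ⟨he, he', _, x, hx, y, hy, hxy⟩ => ?_) _ _ (hC a ha b hb)
  by_cases heq : Sym2.map f e = Sym2.map f e'
  · rw [Function.onFun, heq]
  · exact .single ⟨⟨e, he, rfl⟩, ⟨e', he', rfl⟩, heq, f x, Sym2.mem_map.mpr ⟨x, hx, rfl⟩,
      f y, Sym2.mem_map.mpr ⟨y, hy, rfl⟩, (hf x y).trans hxy⟩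

lemma dist_map_le_length_of_eq_or_adj {W : Type} {Δ : SimpleGraph W} {f : V → W}
    (hf : ∀ a b, Γ.Adj a b → f a = f b ∨ Δ.Adj (f a) (f b)) {x y : V}
    (w : Γ.Walk x y) : Δ.dist (f x) (f y) ≤ w.length := by
  induction w with
  | nil => simp
  | @cons a b c h p ih =>
    rw [Walk.length_cons]
    rcases hf a b h with heq | hadj
    · rw [heq]; omega
    · have := hadj.reachable.dist_triangle_left (f c)
      rw [dist_eq_one_iff_adj.mpr hadj] at this
      omega

lemma _root_.SimpleGraph.Walk.dist_le_length_of_mem_support {x y a : V} (w : Γ.Walk x y)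
    (ha : a ∈ w.support) : Γ.dist x a ≤ w.length := by
  classical
  exact (dist_le (w.takeUntil a ha)).trans (w.length_takeUntil_le_length ha)

end Graph

section Fibration

variable {V W : Type} {Γ : SimpleGraph V} {Δ : SimpleGraph W} {p : V → W}

def FiberWalkBound (Γ : SimpleGraph V) (Δ : SimpleGraph W) (p : V → W) (L : ℕ) : Prop :=
  ∀ x y, p x = p y → ∃ w : Γ.Walk x y, ∀ a ∈ w.support, Δ.dist (p x) (p a) ≤ L

lemma IsFibration.eq_or_adj (hp : IsFibration Γ Δ p) (hΔ : Δ.Connected) {a b : V}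
    (h : Γ.Adj a b) : p a = p b ∨ Δ.Adj (p a) (p b) := by
  refine or_iff_not_imp_left.mpr fun hne => dist_eq_one_iff_adj.mp ?_
  have hle := hp.1 a b
  rw [dist_eq_one_iff_adj.mpr h] at hle
  have := hΔ.pos_dist_of_ne hne
  omega

lemma IsFibration.reachable_deleteEdges_map (hp : IsFibration Γ Δ p) (hΔ : Δ.Connected)
    {A : Set (Sym2 W)} {x y : V}
    (h : (Γ.deleteEdges (Γ.edgeSet ∩ Sym2.map p ⁻¹' A)).Reachable x y) :
    (Δ.deleteEdges A).Reachable (p x) (p y) := by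
  rw [reachable_iff_reflTransGen] at h ⊢
  refine Relation.ReflTransGen.lift' p (fun a b hab => ?_) _ _ h
  obtain ⟨hab, hnot⟩ := deleteEdges_adj.mp hab
  rcases hp.eq_or_adj hΔ hab with heq | hadj
  · rw [Function.onFun, heq]
  · exact .single (deleteEdges_adj.mpr ⟨hadj, fun hA => hnot ⟨hab, hA⟩⟩)

lemma IsFibration.isBondCutset_preimage (hp : IsFibration Γ Δ p) (hΔ : Δ.Connected)
    {A : Set (Sym2 W)} {x y : V} (h : IsBondCutset Δ A (p x) (p y)) :
    IsBondCutset Γ (Γ.edgeSet ∩ Sym2.map p ⁻¹' A) x y :=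
  isBondCutset_iff.mpr ⟨Set.inter_subset_left,
    fun hxy => (isBondCutset_iff.mp h).2 (hp.reachable_deleteEdges_map hΔ hxy)⟩

lemma IsFibration.exists_lift_of_reachable (hp : IsFibration Γ Δ p) {C : Set (Sym2 V)}
    {x : V} {g : W} (h : (Δ.deleteEdges (Sym2.map p '' C)).Reachable (p x) g) :
    ∃ y, p y = g ∧ (Γ.deleteEdges C).Reachable x y := by
  rw [reachable_iff_reflTransGen] at h
  induction h with
  | refl => exact ⟨x, rfl, Reachable.rfl⟩
  | tail _ hadj ih =>
    obtain ⟨y, rfl, hxy⟩ := ih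
    obtain ⟨hadj, hnot⟩ := deleteEdges_adj.mp hadj
    obtain ⟨y', hyy', rfl⟩ := hp.2 y _ hadj
    exact ⟨y', rfl, hxy.trans (deleteEdges_adj.mpr ⟨hyy', fun hC => hnot ⟨_, hC, rfl⟩⟩).reachable⟩

/-- A walk avoiding the image of `C` lifts to a walk avoiding `C` ending in the right fibre;
the fibre walk back to `y` avoids `C` because it stays `L`-close to `p y`. -/
lemma IsFibration.not_reachable_deleteEdges_image (hp : IsFibration Γ Δ p) {L : ℕ}
    (hL : FiberWalkBound Γ Δ p L) {C : Set (Sym2 V)} {x y : V}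
    (hC : ¬(Γ.deleteEdges C).Reachable x y) (hfar : ∀ e ∈ C, ∀ q ∈ e, L < Δ.dist (p y) (p q)) :
    ¬(Δ.deleteEdges (Sym2.map p '' C)).Reachable (p x) (p y) := by
  intro h
  obtain ⟨y', hy', hxy'⟩ := hp.exists_lift_of_reachable h
  obtain ⟨w, hw⟩ := hL y y' hy'.symm
  refine hC (hxy'.trans ⟨(w.toDeleteEdges C fun e he heC => ?_).reverse⟩)
  induction e using Sym2.ind with
  | _ a b =>
    exact (hfar _ heC a (Sym2.mem_mk_left a b)).not_ge
      (hw a (w.fst_mem_support_of_mem_edges he))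

lemma IsMinBondCutset.edgeKConnectedSet_of_isFibration (hp : IsFibration Γ Δ p)
    (hΔ : Δ.Connected) (hsurj : Function.Surjective p) {L : ℕ} (hL : FiberWalkBound Γ Δ p L)
    {k : ℕ} (hk : edgeCutConnLe Γ k) {A : Set (Sym2 W)} {u z : W}
    (hA : IsMinBondCutset Δ A u z) (hz : ∀ e ∈ A, ∀ q ∈ e, L < Δ.dist z q) :
    edgeKConnectedSet Δ k A := by
  obtain ⟨x, rfl⟩ := hsurj u
  obtain ⟨y, rfl⟩ := hsurj z
  obtain ⟨C, hCB, hC⟩ := (hp.isBondCutset_preimage hΔ hA.1).exists_isMinBondCutset_subset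
  have hCA : Sym2.map p '' C ⊆ A := Set.image_subset_iff.mpr fun e he => (hCB he).2
  have hcut : IsBondCutset Δ (Sym2.map p '' C) (p x) (p y) :=
    isBondCutset_iff.mpr ⟨hCA.trans hA.1.1, hp.not_reachable_deleteEdges_image hL
      (isBondCutset_iff.mp hC.1).2 fun e he q hq =>
        hz _ (hCB he).2 _ (Sym2.mem_map.mpr ⟨q, hq, rfl⟩)⟩
  obtain hCA | hCA := hCA.eq_or_ssubset
  · exact hCA ▸ edgeKConnectedSet_image hp.1 (hk x y C hC)
  · exact absurd hcut (hA.2 _ hCA)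

theorem edgeCutConnStarLe_of_isFibration [Infinite W] (hp : IsFibration Γ Δ p)
    (hΔ : Δ.Connected) (hlf : ∀ w, (Δ.neighborSet w).Finite) (hsurj : Function.Surjective p)
    {L : ℕ} (hL : FiberWalkBound Γ Δ p L) {k : ℕ} (hk : edgeCutConnLe Γ k) :
    edgeCutConnStarLe Δ k := by
  intro u v A hAfin hA
  obtain ⟨z, hz⟩ := exists_forall_lt_dist_of_finite hΔ hlf hAfin L
  rcases hA.reachable_or_reachable hΔ z with huz | hvz
  · exact (hA.symm.of_reachable_right huz).edgeKConnectedSet_of_isFibration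
      hp hΔ hsurj hL hk hz
  · exact (hA.of_reachable_right hvz).edgeKConnectedSet_of_isFibration hp hΔ hsurj hL hk hz

end Fibration

section Cayley

variable {K : Type} [Group K] {T : Set K}

def cayleyMulLeft (T : Set K) (x : K) : cayley K T ≃g cayley K T where
  toEquiv := Equiv.mulLeft x
  map_rel_iff' := by simp [cayley, mul_assoc]

lemma cayley_connected (hT : Subgroup.closure T = ⊤) : (cayley K T).Connected := by
  refine (connected_iff_exists_forall_reachable _).mpr ⟨1, fun g => ?_⟩
  induction (hT ▸ Subgroup.mem_top g : g ∈ Subgroup.closure T) using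
    Subgroup.closure_induction with
  | mem s hs =>
    by_cases h1 : 1 = s
    · exact h1 ▸ Reachable.rfl
    · exact Adj.reachable ⟨h1, Or.inl (by simpa using hs)⟩
  | one => exact Reachable.rfl
  | mul a b _ _ ha hb =>
    have hab : (cayley K T).Reachable (a * 1) (a * b) := hb.map (cayleyMulLeft T a).toHom
    exact ha.trans (by simpa using hab)
  | inv a _ ha =>
    have ha' : (cayley K T).Reachable (a⁻¹ * 1) (a⁻¹ * a) :=
      ha.map (cayleyMulLeft T a⁻¹).toHom
    simpa using ha'.symm

lemma cayley_neighborSet_finite (hT : T.Finite) (g : K) :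
    ((cayley K T).neighborSet g).Finite :=
  ((hT.image (g * ·)).union (hT.image fun s => g * s⁻¹)).subset fun n ⟨_, h⟩ => h.elim
    (fun h => Or.inl ⟨g⁻¹ * n, h, by simp⟩) (fun h => Or.inr ⟨n⁻¹ * g, h, by simp⟩)

lemma GroupOneEnded.infinite (h : GroupOneEnded K) (hT : T.Finite)
    (hgen : Subgroup.closure T = ⊤) : Infinite K := by
  obtain ⟨_, -, hinf, -⟩ := h T hT hgen ∅ Set.finite_empty
  exact Set.infinite_univ_iff.mp (hinf.mono (Set.subset_univ _))

end Cayley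

section Quotient

variable {G H : Type} [Group G] [Group H] (pr : H →* G) {S : Set H}

lemma cayley_map_eq_or_adj {a b : H} (h : (cayley H S).Adj a b) :
    pr a = pr b ∨ (cayley G (pr '' S)).Adj (pr a) (pr b) :=
  or_iff_not_imp_left.mpr fun hne =>
    ⟨hne, h.2.imp (fun hs => ⟨_, hs, by simp⟩) (fun hs => ⟨_, hs, by simp⟩)⟩

lemma cayley_exists_adj_of_adj_map {x : H} {g : G} (h : (cayley G (pr '' S)).Adj (pr x) g) :
    ∃ y, (cayley H S).Adj x y ∧ pr y = g := by
  obtain ⟨hne, ⟨s, hs, hsg⟩ | ⟨s, hs, hsg⟩⟩ := h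
  · obtain rfl : g = pr (x * s) := by rw [map_mul, hsg, mul_inv_cancel_left]
    exact ⟨x * s, ⟨fun h => hne (congrArg pr h), Or.inl (by simpa using hs)⟩, rfl⟩
  · obtain rfl : g = pr (x * s⁻¹) := by rw [map_mul, map_inv, hsg]; group
    exact ⟨x * s⁻¹, ⟨fun h => hne (congrArg pr h), Or.inr (by simpa using hs)⟩, rfl⟩

lemma isFibration_cayley (hS : Subgroup.closure S = ⊤) :
    IsFibration (cayley H S) (cayley G (pr '' S)) pr := by
  refine ⟨fun x y => ?_, fun x g h => cayley_exists_adj_of_adj_map pr h⟩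
  obtain ⟨w, hw⟩ := (cayley_connected hS).exists_walk_length_eq_dist x y
  exact hw ▸ dist_map_le_length_of_eq_or_adj (fun a b => cayley_map_eq_or_adj pr) w

lemma exists_walk_mul_of_mem_closure (hS : Subgroup.closure S = ⊤) {T : Set H}
    (hT : T ⊆ pr.ker) {L : ℕ} (hL : ∀ t ∈ T, (cayley H S).dist 1 t ≤ L) {h : H}
    (hh : h ∈ Subgroup.closure T) (x : H) :
    ∃ w : (cayley H S).Walk x (x * h), ∀ a ∈ w.support,
      (cayley G (pr '' S)).dist (pr x) (pr a) ≤ L := by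
  induction hh using Subgroup.closure_induction generalizing x with
  | mem t ht =>
    obtain ⟨w₀, hw₀⟩ := (cayley_connected hS).exists_walk_length_eq_dist 1 t
    let w : (cayley H S).Walk x (x * t) :=
      (w₀.map (cayleyMulLeft S x).toHom).copy (mul_one x) rfl
    refine ⟨w, fun a ha => ?_⟩
    calc (cayley G (pr '' S)).dist (pr x) (pr a)
        ≤ (cayley H S).dist x a := (isFibration_cayley pr hS).1 x a
      _ ≤ w.length := w.dist_le_length_of_mem_support ha
      _ = (cayley H S).dist 1 t :=
        (Walk.length_copy _ _ _).trans ((Walk.length_map _ _).trans hw₀)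
      _ ≤ L := hL t ht
  | one => exact ⟨Walk.nil.copy rfl (mul_one x).symm, fun a ha => by simp_all⟩
  | mul a b ha _ iha ihb =>
    obtain ⟨w₁, hw₁⟩ := iha x
    obtain ⟨w₂, hw₂⟩ := ihb (x * a)
    have hpa : pr a = 1 := Subgroup.closure_le _ |>.mpr hT ha
    refine ⟨(w₁.append w₂).copy rfl (mul_assoc x a b), fun z hz => ?_⟩
    rw [Walk.support_copy, Walk.mem_support_append_iff] at hz
    rcases hz with hz | hz
    · exact hw₁ z hz
    · simpa [hpa] using hw₂ z hz
  | inv a ha iha =>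
    obtain ⟨w, hw⟩ := iha (x * a⁻¹)
    have hpa : pr a = 1 := Subgroup.closure_le _ |>.mpr hT ha
    refine ⟨(w.copy rfl (inv_mul_cancel_right x a)).reverse, fun z hz => ?_⟩
    rw [Walk.support_reverse, List.mem_reverse, Walk.support_copy] at hz
    simpa [hpa] using hw z hz

lemma fiberWalkBound_cayley (hS : Subgroup.closure S = ⊤) (hker : pr.ker.FG) :
    ∃ L, FiberWalkBound (cayley H S) (cayley G (pr '' S)) pr L := by
  obtain ⟨T, hT⟩ := hker
  refine ⟨T.sup ((cayley H S).dist 1), fun x y hxy => ?_⟩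
  have hmem : x⁻¹ * y ∈ Subgroup.closure (T : Set H) := by
    rw [hT, MonoidHom.mem_ker, map_mul, map_inv, hxy, inv_mul_cancel]
  obtain ⟨w, hw⟩ := exists_walk_mul_of_mem_closure pr hS (hT ▸ Subgroup.subset_closure)
    (fun t ht => Finset.le_sup ht) hmem x
  exact ⟨w.copy rfl (mul_inv_cancel_left x y), by simpa using hw⟩

end Quotient

/-- Corollary: cutconnectivity along group quotients.
Let `G` and `H` be finitely generated groups with `G` one-ended and `H`
Noetherian, let `π : H → G` be a surjective homomorphism and `S` a finite
generating set of `H`.  Then `C*_E(Cay(G,π(S))) ≤ C_E(Cay(H,S))`. -/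
theorem edgeCutConnStar_cayley_quotient
    (G H : Type) [Group G] [Group H]
    (hGone : GroupOneEnded G)
    (hNoeth : ∀ K : Subgroup H, K.FG)
    (pr : H →* G) (hsurj : Function.Surjective pr)
    (S : Set H) (hSfin : S.Finite) (hSgen : Subgroup.closure S = ⊤) :
    ∀ k : ℕ, 1 ≤ k → edgeCutConnLe (cayley H S) k →
      edgeCutConnStarLe (cayley G (pr '' S)) k := by
  intro k _ hk
  have hSG : Subgroup.closure (pr '' S) = ⊤ := by
    rw [← MonoidHom.map_closure, hSgen, Subgroup.map_top_of_surjective _ hsurj]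
  have := hGone.infinite (hSfin.image pr) hSG
  obtain ⟨L, hL⟩ := fiberWalkBound_cayley pr hSgen (hNoeth pr.ker)
  exact edgeCutConnStarLe_of_isFibration (isFibration_cayley pr hSgen) (cayley_connected hSG)
    (cayley_neighborSet_finite (hSfin.image pr)) hsurj hL hk

end PercPaper
end

section
/- Let G be a graph in 𝔊 with a fixed vertex o, let N ≥ 1, and let ω be a percolation configuration on G such that 20N < diam(C_o) < ∞. Then every vertex of ∂C_o(N) is N-bad in ω. -/
open MeasureTheory Set
open scoped ENNReal

namespace PercPaper

/-! If a vertex `x` of `∂C_o(N)` were `N`-good, so would be its neighbour `w` outside `C_o(N)`.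
As `diam C_o > 20N`, the cluster `C_o` crosses `B(w,5N)` starting within `B(w,2N)`, and so does
the open crossing of `B(w,N)` given by goodness; the uniqueness event `U(2N,5N,w)` then joins the
two, which puts a vertex of `C_o` within distance `N` of `w`. -/

lemma _root_.SimpleGraph.Connected.exists_lt_dist_of_two_mul_lt_dist {V : Type}
    {G : SimpleGraph V} (hG : G.Connected) {r : ℕ} {x y : V} (hxy : 2 * r < G.dist x y) (u : V) :
    ∃ v ∈ ({x, y} : Set V), r < G.dist u v := by
  have := hG.dist_triangle (u := x) (v := u) (w := y)
  have := G.dist_comm (u := x) (v := u)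
  by_cases hux : r < G.dist u x
  · exact ⟨x, by simp, hux⟩
  · exact ⟨y, by simp, by omega⟩

section Percolation

variable {Γ : SpaceGraph} {ω : Sym2 Γ.V → Bool}

lemma Conn.symm {u v : Γ.V} (h : Conn Γ ω u v) : Conn Γ ω v u :=
  haveI : Std.Symm (openAdj Γ ω) := ⟨fun _ _ hab => ⟨hab.1.symm, Sym2.eq_swap ▸ hab.2⟩⟩
  Std.Symm.symm (r := Relation.ReflTransGen (openAdj Γ ω)) _ _ h

lemma ConnIn.conn {S : Set Γ.V} {u v : Γ.V} (h : ConnIn Γ ω S u v) : Conn Γ ω u v :=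
  Relation.ReflTransGen.mono (fun _ _ hab => hab.2.2) _ _ h

lemma Conn.exists_connIn_ball_sphere {w a b : Γ.V} {n : ℕ} (h : Conn Γ ω a b)
    (ha : a ∈ ball Γ w n) (hb : n ≤ Γ.G.dist w b) :
    ∃ c ∈ sphere Γ w n, ConnIn Γ ω (ball Γ w n) a c := by
  induction h using Relation.ReflTransGen.head_induction_on with
  | refl => exact ⟨b, le_antisymm ha hb, .refl⟩
  | @head p q hpq _ ih =>
    rcases (show Γ.G.dist w p ≤ n from ha).eq_or_lt with hp | hp
    · exact ⟨p, hp, .refl⟩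
    · have hq : q ∈ ball Γ w n := by
        have := Γ.connected.dist_triangle (u := w) (v := p) (w := q)
        have := SimpleGraph.dist_eq_one_iff_adj.mpr hpq.1
        exact (show Γ.G.dist w q ≤ n by omega)
      obtain ⟨c, hc, hqc⟩ := ih hq
      exact ⟨c, hc, .head ⟨ha, hq, hpq⟩ hqc⟩

lemma UEvent.connIn_of_conn {m n : ℕ} {z a a' b b' : Γ.V} (hU : UEvent Γ ω m n z)
    (hmn : m ≤ n) (ha : a ∈ ball Γ z m) (ha' : a' ∈ ball Γ z m)
    (hab : Conn Γ ω a b) (hb : n ≤ Γ.G.dist z b)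
    (hab' : Conn Γ ω a' b') (hb' : n ≤ Γ.G.dist z b') :
    ConnIn Γ ω (ball Γ z n) a a' := by
  obtain ⟨c, hc, hac⟩ := hab.exists_connIn_ball_sphere (ha.trans (by exact_mod_cast hmn)) hb
  obtain ⟨c', hc', hac'⟩ :=
    hab'.exists_connIn_ball_sphere (ha'.trans (by exact_mod_cast hmn)) hb'
  exact hU a c a' c' ha hc ha' hc' hac hac'

lemma mem_clusterNbhd_of_good {o z u v : Γ.V} {N : ℕ}
    (hcross : ∃ a ∈ ball Γ z N, ∃ b ∈ sphere Γ z (10 * N), Conn Γ ω a b)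
    (hU : UEvent Γ ω (2 * N) (5 * N) z)
    (hu : u ∈ cluster Γ ω o) (hzu : Γ.G.dist z u ≤ 2 * N)
    (hv : v ∈ cluster Γ ω o) (hzv : 5 * N ≤ Γ.G.dist z v) :
    z ∈ clusterNbhd Γ ω o N := by
  obtain ⟨a, ha, b, hb, hab⟩ := hcross
  have hb : 5 * N ≤ Γ.G.dist z b := by rw [show Γ.G.dist z b = 10 * N from hb]; omega
  have hua : ConnIn Γ ω (ball Γ z (5 * N)) u a :=
    hU.connIn_of_conn (by omega) hzu (show Γ.G.dist z a ≤ 2 * N by have := ha.out; omega)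
      ((Conn.symm hu).trans hv) hzv hab hb
  exact ⟨a, (hu : Conn Γ ω o u).trans hua.conn, ha⟩

end Percolation

theorem exposedBoundary_bad_general
    (Γ : SpaceGraph) (o : Γ.V) (N : ℕ) (hN : 1 ≤ N)
    (ω : Sym2 Γ.V → Bool)
    (hdiam : ∃ x ∈ cluster Γ ω o, ∃ y ∈ cluster Γ ω o, 20 * N < Γ.G.dist x y) :
    ∀ x ∈ exposedBoundary Γ (clusterNbhd Γ ω o N), NBad Γ ω N x := by
  rintro x ⟨⟨u, hu, hxu⟩, w, hw, hxw, -⟩ hgood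
  obtain ⟨hcross, hU⟩ := hgood w (Or.inr hxw)
  obtain ⟨x₁, hx₁, x₂, hx₂, hdiam⟩ := hdiam
  obtain ⟨v, hv, huv⟩ :=
    Γ.connected.exists_lt_dist_of_two_mul_lt_dist (x := x₁) (y := x₂) (r := 10 * N) (by omega) u
  have hvC : v ∈ cluster Γ ω o := by rcases hv with rfl | rfl <;> assumption
  have hwu : Γ.G.dist w u ≤ 2 * N := by
    have := SimpleGraph.dist_eq_one_iff_adj.mpr hxw.symm
    have := Γ.connected.dist_triangle (u := w) (v := x) (w := u)
    omega
  have hwv : 5 * N ≤ Γ.G.dist w v := by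
    have := Γ.connected.dist_triangle (u := u) (v := w) (w := v)
    have := Γ.G.dist_comm (u := u) (v := w)
    omega
  exact hw (mem_clusterNbhd_of_good hcross hU hu hwu hvC hwv)

/-- Proposition: boundary vertices are bad.
Let `G ∈ 𝔊` with root `o`, `N ≥ 1`, and let `ω` be a configuration with
`20N < diam(C_o) < ∞`.  Then every vertex of `∂C_o(N)` is `N`-bad in `ω`. -/
theorem exposedBoundary_bad
    (Γ : SpaceGraph) (hΓ : InPolyClass Γ) (o : Γ.V) (N : ℕ) (hN : 1 ≤ N)
    (ω : Sym2 Γ.V → Bool)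
    (hfin : (cluster Γ ω o).Finite)
    (hdiam : ∃ x ∈ cluster Γ ω o, ∃ y ∈ cluster Γ ω o, 20 * N < Γ.G.dist x y) :
    ∀ x ∈ exposedBoundary Γ (clusterNbhd Γ ω o N), NBad Γ ω N x :=
  exposedBoundary_bad_general Γ o N hN ω hdiam

end PercPaper
end
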